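/- Let α₁, …, α₅ ∈ ℂ. There exist polynomials P₁, P₂, P₃ ∈ ℂ[X, Y, Z] (depending only on α₁,…,α₅) such that for every solution (x, y, z) of the modified reduced three-wave interaction system (2) on a connected open set U ⊆ ℂ with x nonvanishing, the functions x₁ = 1/x, y₁ = −(y − √−1·x + α₁)x, z₁ = (z + α₂)x satisfy dx₁/dt = P₁(x₁, y₁, z₁), dy₁/dt = P₂(x₁, y₁, z₁), dz₁/dt = P₃(x₁, y₁, z₁) on U. -/
import Mathlib


open Complex

noncomputable section

/-- A solution of the modified reduced three-wave interaction dynamical system (2)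
on a set `U ⊆ ℂ`, with parameters `α₁, …, α₅ : ℂ`. -/
def solMTWI (α₁ α₂ α₃ α₄ α₅ : ℂ) (x y z : ℂ → ℂ) (U : Set ℂ) : Prop :=
  ∀ t ∈ U,
    HasDerivAt x
      (-2 * (y t) ^ 2 - (α₁ + α₃ - 2 * α₅) * y t + z t
        + (α₂ + α₄ + 2 * (α₁ + α₃) * α₅) / 2) t ∧
    HasDerivAt y
      (2 * x t * y t - 2 * α₅ * x t + I * (α₁ - α₃) * y t
        - I * (α₂ - α₄ + 2 * (α₁ - α₃) * α₅) / 2) t ∧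
    HasDerivAt z
      (-2 * x t * z t - (α₂ + α₄) * x t + I * (α₂ - α₄) * y t
        - I * (α₁ - α₃) * z t + I * (α₂ * α₃ - α₁ * α₄)) t

set_option maxHeartbeats 2000000 in
theorem stmt12 (α₁ α₂ α₃ α₄ α₅ : ℂ) :
    ∃ P₁ P₂ P₃ : MvPolynomial (Fin 3) ℂ,
      ∀ (U : Set ℂ), IsOpen U → IsConnected U →
      ∀ x y z : ℂ → ℂ, solMTWI α₁ α₂ α₃ α₄ α₅ x y z U → (∀ t ∈ U, x t ≠ 0) →
      ∀ t ∈ U,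
        HasDerivAt (fun s => 1 / x s)
          (MvPolynomial.eval ![1 / x t, -(y t - I * x t + α₁) * x t, (z t + α₂) * x t] P₁) t ∧
        HasDerivAt (fun s => -(y s - I * x s + α₁) * x s)
          (MvPolynomial.eval ![1 / x t, -(y t - I * x t + α₁) * x t, (z t + α₂) * x t] P₂) t ∧
        HasDerivAt (fun s => (z s + α₂) * x s)
          (MvPolynomial.eval ![1 / x t, -(y t - I * x t + α₁) * x t, (z t + α₂) * x t] P₃) t := by
  refine ⟨MvPolynomial.C 2 * MvPolynomial.X 0^4 * MvPolynomial.X 1^2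
      + MvPolynomial.C (3*α₁ - α₃ + 2*α₅) * MvPolynomial.X 0^3 * MvPolynomial.X 1
      - MvPolynomial.X 0^3 * MvPolynomial.X 2
      - MvPolynomial.C (4*I) * MvPolynomial.X 0^2 * MvPolynomial.X 1
      - MvPolynomial.C (-α₁^2 + α₁*α₃ - α₁*α₅ + α₃*α₅ + (α₄-α₂)/2) * MvPolynomial.X 0^2
      - MvPolynomial.C (I*(3*α₁ - α₃ + 2*α₅)) * MvPolynomial.X 0 - MvPolynomial.C 2,
    MvPolynomial.C (-2) * MvPolynomial.X 0^3 * MvPolynomial.X 1^3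
      - MvPolynomial.C (3*α₁ - α₃ + 2*α₅) * MvPolynomial.X 0^2 * MvPolynomial.X 1^2
      + MvPolynomial.X 0^2 * MvPolynomial.X 1 * MvPolynomial.X 2
      + MvPolynomial.C (2*I) * MvPolynomial.X 0 * MvPolynomial.X 1^2
      + MvPolynomial.C (-α₁^2 + α₁*α₃ - α₁*α₅ + α₃*α₅ + (α₄-α₂)/2) * MvPolynomial.X 0 * MvPolynomial.X 1
      + MvPolynomial.C (I*(α₁-α₃)) * MvPolynomial.X 1 + MvPolynomial.C I * MvPolynomial.X 2,
    MvPolynomial.C (-2) * MvPolynomial.X 0^3 * MvPolynomial.X 1^2 * MvPolynomial.X 2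
      - MvPolynomial.C (3*α₁ - α₃ + 2*α₅) * MvPolynomial.X 0^2 * MvPolynomial.X 1 * MvPolynomial.X 2
      + MvPolynomial.X 0^2 * MvPolynomial.X 2^2
      + MvPolynomial.C (4*I) * MvPolynomial.X 0 * MvPolynomial.X 1 * MvPolynomial.X 2
      + MvPolynomial.C (-α₁^2 + α₁*α₃ - α₁*α₅ + α₃*α₅ + (α₄-α₂)/2) * MvPolynomial.X 0 * MvPolynomial.X 2
      + MvPolynomial.C (2*I*(α₁+α₅)) * MvPolynomial.X 2
      - MvPolynomial.C (I*(α₂-α₄)) * MvPolynomial.X 1, ?_⟩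
  intro U hU hUc x y z hsol hx0 t ht
  obtain ⟨hx, hy, hz⟩ := hsol t ht
  have hxt : x t ≠ 0 := hx0 t ht
  have h2 : I ^ 2 = (-1 : ℂ) := I_sq
  have hu : (1 / x t) * x t = 1 := one_div_mul_cancel hxt
  refine ⟨?_, ?_, ?_⟩
  · have h := (hasDerivAt_const t (1:ℂ)).div hx hxt
    have e : MvPolynomial.eval ![1 / x t, -(y t - I * x t + α₁) * x t, (z t + α₂) * x t]
        (MvPolynomial.C 2 * MvPolynomial.X 0^4 * MvPolynomial.X 1^2
          + MvPolynomial.C (3*α₁ - α₃ + 2*α₅) * MvPolynomial.X 0^3 * MvPolynomial.X 1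
          - MvPolynomial.X 0^3 * MvPolynomial.X 2
          - MvPolynomial.C (4*I) * MvPolynomial.X 0^2 * MvPolynomial.X 1
          - MvPolynomial.C (-α₁^2 + α₁*α₃ - α₁*α₅ + α₃*α₅ + (α₄-α₂)/2) * MvPolynomial.X 0^2
          - MvPolynomial.C (I*(3*α₁ - α₃ + 2*α₅)) * MvPolynomial.X 0 - MvPolynomial.C 2)
        = (0 * x t - 1 * (-2 * (y t) ^ 2 - (α₁ + α₃ - 2 * α₅) * y t + z t
            + (α₂ + α₄ + 2 * (α₁ + α₃) * α₅) / 2)) / x t ^ 2 := by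
      simp only [MvPolynomial.eval_X, MvPolynomial.eval_C, map_add, map_sub, map_mul, map_pow,
        Matrix.cons_val_zero, Matrix.cons_val_one, Matrix.head_cons, Matrix.cons_val_two,
        Matrix.tail_cons]
      rw [eq_div_iff (pow_ne_zero 2 hxt)]
      linear_combination ((-1/2 : ℂ) * α₄ + (-1 : ℂ) * α₃ * α₅ + (-1/2 : ℂ) * α₂ + (-1 : ℂ) * α₁ * α₅ + (-1 : ℂ) * (z t) + (-2 : ℂ) * (y t) * α₅ + (y t) * α₃ + (y t) * α₁ + (2 : ℂ) * (y t)^2 + (-1/2 : ℂ) * (x t) * (1 / x t) * α₄ + (-1 : ℂ) * (x t) * (1 / x t) * α₃ * α₅ + (-1/2 : ℂ) * (x t) * (1 / x t) * α₂ + (-1 : ℂ) * (x t) * (1 / x t) * α₁ * α₅ + (-1 : ℂ) * (x t) * (1 / x t) * (z t) + (-2 : ℂ) * (x t) * (1 / x t) * (y t) * α₅ + (x t) * (1 / x t) * (y t) * α₃ + (x t) * (1 / x t) * (y t) * α₁ + (2 : ℂ) * (x t) * (1 / x t) * (y t)^2 + (-2 : ℂ) * (x t)^2 * I^2 + (2 :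 ℂ) * (x t)^2 * (1 / x t) * α₅ * I + (-1 : ℂ) * (x t)^2 * (1 / x t) * α₃ * I + (3 : ℂ) * (x t)^2 * (1 / x t) * α₁ * I + (-1 : ℂ) * (x t)^2 * (1 / x t)^2 * α₂ + (-2 : ℂ) * (x t)^2 * (1 / x t)^2 * α₁ * α₅ + (x t)^2 * (1 / x t)^2 * α₁ * α₃ + (-1 : ℂ) * (x t)^2 * (1 / x t)^2 * α₁^2 + (-1 : ℂ) * (x t)^2 * (1 / x t)^2 * (z t) + (-2 : ℂ) * (x t)^2 * (1 / x t)^2 * (y t) * α₅ + (x t)^2 * (1 / x t)^2 * (y t) * α₃ + (x t)^2 * (1 / x t)^2 * (y t) * α₁ + (2 : ℂ) * (x t)^2 * (1 / x t)^2 * (y t)^2 + (-2 : ℂ) * (x t)^3 * (1 / x t) * I^2 + (2 : ℂ) * (x t)^3 * (1 / x t)^2 * α₅ * I + (-1 : ℂ) * (x t)^3 * (1 / x t)^2 * α₃ * I + (-1 : ℂ) * (x t)^3 * (1 / x t)^2 * α₁ * I + (-4 : ℂ) * (x t)^3 * (1 / x t)^2 * (y t) * I + (2 : ℂ) * (x t)^3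 * (1 / x t)^3 * α₁^2 + (4 : ℂ) * (x t)^3 * (1 / x t)^3 * (y t) * α₁ + (2 : ℂ) * (x t)^3 * (1 / x t)^3 * (y t)^2 + (2 : ℂ) * (x t)^4 * (1 / x t)^2 * I^2 + (-4 : ℂ) * (x t)^4 * (1 / x t)^3 * α₁ * I + (-4 : ℂ) * (x t)^4 * (1 / x t)^3 * (y t) * I + (2 : ℂ) * (x t)^5 * (1 / x t)^3 * I^2) * hu + ((-2 : ℂ) * (x t)^2) * h2
    rw [e]; exact h
  · have h := (((hy.sub (hx.const_mul I)).add_const α₁).neg).mul hx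
    have e : MvPolynomial.eval ![1 / x t, -(y t - I * x t + α₁) * x t, (z t + α₂) * x t]
        (MvPolynomial.C (-2) * MvPolynomial.X 0^3 * MvPolynomial.X 1^3
          - MvPolynomial.C (3*α₁ - α₃ + 2*α₅) * MvPolynomial.X 0^2 * MvPolynomial.X 1^2
          + MvPolynomial.X 0^2 * MvPolynomial.X 1 * MvPolynomial.X 2
          + MvPolynomial.C (2*I) * MvPolynomial.X 0 * MvPolynomial.X 1^2
          + MvPolynomial.C (-α₁^2 + α₁*α₃ - α₁*α₅ + α₃*α₅ + (α₄-α₂)/2) * MvPolynomial.X 0 * MvPolynomial.X 1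
          + MvPolynomial.C (I*(α₁-α₃)) * MvPolynomial.X 1 + MvPolynomial.C I * MvPolynomial.X 2)
        = -((2 * x t * y t - 2 * α₅ * x t + I * (α₁ - α₃) * y t
              - I * (α₂ - α₄ + 2 * (α₁ - α₃) * α₅) / 2)
            - I * (-2 * (y t) ^ 2 - (α₁ + α₃ - 2 * α₅) * y t + z t
              + (α₂ + α₄ + 2 * (α₁ + α₃) * α₅) / 2)) * x t
          + -(y t - I * x t + α₁) * (-2 * (y t) ^ 2 - (α₁ + α₃ - 2 * α₅) * y t + z t
              + (α₂ + α₄ + 2 * (α₁ + α₃) * α₅) / 2) := by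
      simp only [MvPolynomial.eval_X, MvPolynomial.eval_C, map_add, map_sub, map_mul, map_pow,
        map_neg, Matrix.cons_val_zero, Matrix.cons_val_one, Matrix.head_cons, Matrix.cons_val_two,
        Matrix.tail_cons]
      linear_combination ((-1/2 : ℂ) * α₁ * α₄ + (-1 : ℂ) * α₁ * α₃ * α₅ + (-1/2 : ℂ) * α₁ * α₂ + (-1 : ℂ) * α₁^2 * α₅ + (-1 : ℂ) * (z t) * α₁ + (-1/2 : ℂ) * (y t) * α₄ + (-1 : ℂ) * (y t) * α₃ * α₅ + (-1/2 : ℂ) * (y t) * α₂ + (-3 : ℂ) * (y t) * α₁ * α₅ + (y t) * α₁ * α₃ + (y t) * α₁^2 + (-1 : ℂ) * (y t) * (z t) + (-2 : ℂ) * (y t)^2 * α₅ + (y t)^2 * α₃ + (3 : ℂ) * (y t)^2 * α₁ + (2 : ℂ) * (y t)^3 + (1/2 : ℂ) * (x t) * α₄ * I + (x t) * α₃ * α₅ * I + (1/2 : ℂ) * (x t) * α₂ * I + (3 : ℂ) * (x t) * α₁ * α₅ * I + (-1 : ℂ) * (x t) * α₁ * α₃ * I + (x t) * α₁^2 * I +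 (x t) * (z t) * I + (4 : ℂ) * (x t) * (y t) * α₅ * I + (-2 : ℂ) * (x t) * (y t) * α₃ * I + (-2 : ℂ) * (x t) * (y t) * α₁ * I + (-4 : ℂ) * (x t) * (y t)^2 * I + (-1 : ℂ) * (x t) * (1 / x t) * α₁ * α₂ + (-2 : ℂ) * (x t) * (1 / x t) * α₁^2 * α₅ + (x t) * (1 / x t) * α₁^2 * α₃ + (-1 : ℂ) * (x t) * (1 / x t) * α₁^3 + (-1 : ℂ) * (x t) * (1 / x t) * (z t) * α₁ + (-1 : ℂ) * (x t) * (1 / x t) * (y t) * α₂ + (-4 : ℂ) * (x t) * (1 / x t) * (y t) * α₁ * α₅ + (2 : ℂ) * (x t) * (1 / x t) * (y t) * α₁ * α₃ + (-1 : ℂ) * (x t) * (1 / x t) * (y t) * (z t) + (-2 : ℂ) * (x t) * (1 / x t) * (y t)^2 * α₅ + (x t) * (1 / x t) * (y t)^2 * α₃ + (3 : ℂ) * (x t) * (1 / x t) * (y t)^2 * α₁ + (2 : ℂ) * (x t) * (1 / x t) * (y t)^3 + (-2 : ℂ) * (x t)^2 * α₅ * I^2 + (x t)^2 * α₃ * I^2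 + (-1 : ℂ) * (x t)^2 * α₁ * I^2 + (2 : ℂ) * (x t)^2 * (y t) * I^2 + (x t)^2 * (1 / x t) * α₂ * I + (4 : ℂ) * (x t)^2 * (1 / x t) * α₁ * α₅ * I + (-2 : ℂ) * (x t)^2 * (1 / x t) * α₁ * α₃ * I + (x t)^2 * (1 / x t) * (z t) * I + (4 : ℂ) * (x t)^2 * (1 / x t) * (y t) * α₅ * I + (-2 : ℂ) * (x t)^2 * (1 / x t) * (y t) * α₃ * I + (-6 : ℂ) * (x t)^2 * (1 / x t) * (y t) * α₁ * I + (-6 : ℂ) * (x t)^2 * (1 / x t) * (y t)^2 * I + (2 : ℂ) * (x t)^2 * (1 / x t)^2 * α₁^3 + (6 : ℂ) * (x t)^2 * (1 / x t)^2 * (y t) * α₁^2 + (6 : ℂ) * (x t)^2 * (1 / x t)^2 * (y t)^2 * α₁ + (2 : ℂ) * (x t)^2 * (1 / x t)^2 * (y t)^3 + (-2 : ℂ) * (x t)^3 * (1 / x t) * α₅ * I^2 + (x t)^3 * (1 / x t) * α₃ * I^2 + (3 : ℂ) * (x t)^3 * (1 / x t) * α₁ * I^2 + (6 : ℂ) *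 (x t)^3 * (1 / x t) * (y t) * I^2 + (-6 : ℂ) * (x t)^3 * (1 / x t)^2 * α₁^2 * I + (-12 : ℂ) * (x t)^3 * (1 / x t)^2 * (y t) * α₁ * I + (-6 : ℂ) * (x t)^3 * (1 / x t)^2 * (y t)^2 * I + (-2 : ℂ) * (x t)^4 * (1 / x t) * I^3 + (6 : ℂ) * (x t)^4 * (1 / x t)^2 * α₁ * I^2 + (6 : ℂ) * (x t)^4 * (1 / x t)^2 * (y t) * I^2 + (-2 : ℂ) * (x t)^5 * (1 / x t)^2 * I^3) * hu + ((-2 : ℂ) * (x t)^2 * α₅ + (2 : ℂ) * (x t)^2 * (y t)) * h2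
    rw [e]
    exact h
  · have h := (hz.add_const α₂).mul hx
    have e : MvPolynomial.eval ![1 / x t, -(y t - I * x t + α₁) * x t, (z t + α₂) * x t]
        (MvPolynomial.C (-2) * MvPolynomial.X 0^3 * MvPolynomial.X 1^2 * MvPolynomial.X 2
          - MvPolynomial.C (3*α₁ - α₃ + 2*α₅) * MvPolynomial.X 0^2 * MvPolynomial.X 1 * MvPolynomial.X 2
          + MvPolynomial.X 0^2 * MvPolynomial.X 2^2
          + MvPolynomial.C (4*I) * MvPolynomial.X 0 * MvPolynomial.X 1 * MvPolynomial.X 2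
          + MvPolynomial.C (-α₁^2 + α₁*α₃ - α₁*α₅ + α₃*α₅ + (α₄-α₂)/2) * MvPolynomial.X 0 * MvPolynomial.X 2
          + MvPolynomial.C (2*I*(α₁+α₅)) * MvPolynomial.X 2
          - MvPolynomial.C (I*(α₂-α₄)) * MvPolynomial.X 1)
        = (-2 * x t * z t - (α₂ + α₄) * x t + I * (α₂ - α₄) * y t
            - I * (α₁ - α₃) * z t + I * (α₂ * α₃ - α₁ * α₄)) * x t
          + (z t + α₂) * (-2 * (y t) ^ 2 - (α₁ + α₃ - 2 * α₅) * y t + z t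
            + (α₂ + α₄ + 2 * (α₁ + α₃) * α₅) / 2) := by
      simp only [MvPolynomial.eval_X, MvPolynomial.eval_C, map_add, map_sub, map_mul, map_pow,
        map_neg, Matrix.cons_val_zero, Matrix.cons_val_one, Matrix.head_cons, Matrix.cons_val_two,
        Matrix.tail_cons]
      linear_combination ((1/2 : ℂ) * α₂ * α₄ + α₂ * α₃ * α₅ + (1/2 : ℂ) * α₂^2 + α₁ * α₂ * α₅ + (1/2 : ℂ) * (z t) * α₄ + (z t) * α₃ * α₅ + (3/2 : ℂ) * (z t) * α₂ + (z t) * α₁ * α₅ + (z t)^2 + (2 : ℂ) * (y t) * α₂ * α₅ + (-1 : ℂ) * (y t) * α₂ * α₃ + (-1 : ℂ) * (y t) * α₁ * α₂ + (2 : ℂ) * (y t) * (z t) * α₅ + (-1 : ℂ) * (y t) * (z t) * α₃ + (-1 : ℂ) * (y t) * (z t) * α₁ + (-2 : ℂ) * (y t)^2 * α₂ + (-2 : ℂ) * (y t)^2 * (z t) + (-2 : ℂ) * (x t) * α₂ * α₅ * I + (x t) * α₂ * α₃ * I + (-3 : ℂ) * (x t) * α₁ * α₂ * I + (-2 : ℂ)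 * (x t) * (z t) * α₅ * I + (x t) * (z t) * α₃ * I + (-3 : ℂ) * (x t) * (z t) * α₁ * I + (x t) * (1 / x t) * α₂^2 + (2 : ℂ) * (x t) * (1 / x t) * α₁ * α₂ * α₅ + (-1 : ℂ) * (x t) * (1 / x t) * α₁ * α₂ * α₃ + (x t) * (1 / x t) * α₁^2 * α₂ + (2 : ℂ) * (x t) * (1 / x t) * (z t) * α₂ + (2 : ℂ) * (x t) * (1 / x t) * (z t) * α₁ * α₅ + (-1 : ℂ) * (x t) * (1 / x t) * (z t) * α₁ * α₃ + (x t) * (1 / x t) * (z t) * α₁^2 + (x t) * (1 / x t) * (z t)^2 + (2 : ℂ) * (x t) * (1 / x t) * (y t) * α₂ * α₅ + (-1 : ℂ) * (x t) * (1 / x t) * (y t) * α₂ * α₃ + (-1 : ℂ) * (x t) * (1 / x t) * (y t) * α₁ * α₂ + (2 : ℂ) * (x t) * (1 / x t) * (y t) * (z t) * α₅ + (-1 : ℂ) * (x t) * (1 / x t) * (y t) * (z t) * α₃ + (-1 : ℂ) * (x t) * (1 / x t) * (y t) * (z t) * α₁ + (-2 : ℂ) * (x t) * (1 / x t) * (y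 t)^2 * α₂ + (-2 : ℂ) * (x t) * (1 / x t) * (y t)^2 * (z t) + (2 : ℂ) * (x t)^2 * α₂ * I^2 + (2 : ℂ) * (x t)^2 * (z t) * I^2 + (-2 : ℂ) * (x t)^2 * (1 / x t) * α₂ * α₅ * I + (x t)^2 * (1 / x t) * α₂ * α₃ * I + (x t)^2 * (1 / x t) * α₁ * α₂ * I + (-2 : ℂ) * (x t)^2 * (1 / x t) * (z t) * α₅ * I + (x t)^2 * (1 / x t) * (z t) * α₃ * I + (x t)^2 * (1 / x t) * (z t) * α₁ * I + (4 : ℂ) * (x t)^2 * (1 / x t) * (y t) * α₂ * I + (4 : ℂ) * (x t)^2 * (1 / x t) * (y t) * (z t) * I + (-2 : ℂ) * (x t)^2 * (1 / x t)^2 * α₁^2 * α₂ + (-2 : ℂ) * (x t)^2 * (1 / x t)^2 * (z t) * α₁^2 + (-4 : ℂ) * (x t)^2 * (1 / x t)^2 * (y t) * α₁ * α₂ + (-4 : ℂ) * (x t)^2 * (1 / x t)^2 * (y t) * (z t) * α₁ + (-2 : ℂ) * (x t)^2 * (1 / x t)^2 * (y t)^2 * α₂ + (-2 : ℂ) * (x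 t)^2 * (1 / x t)^2 * (y t)^2 * (z t) + (-2 : ℂ) * (x t)^3 * (1 / x t) * α₂ * I^2 + (-2 : ℂ) * (x t)^3 * (1 / x t) * (z t) * I^2 + (4 : ℂ) * (x t)^3 * (1 / x t)^2 * α₁ * α₂ * I + (4 : ℂ) * (x t)^3 * (1 / x t)^2 * (z t) * α₁ * I + (4 : ℂ) * (x t)^3 * (1 / x t)^2 * (y t) * α₂ * I + (4 : ℂ) * (x t)^3 * (1 / x t)^2 * (y t) * (z t) * I + (-2 : ℂ) * (x t)^4 * (1 / x t)^2 * α₂ * I^2 + (-2 : ℂ) * (x t)^4 * (1 / x t)^2 * (z t) * I^2) * hu + ((x t)^2 * α₄ + (x t)^2 * α₂ + (2 : ℂ) * (x t)^2 * (z t)) * h2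
    rw [e]
    exact h
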